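/- (Heins) Let A > 1 and let F : ℍ → ℍ be a holomorphic self-map of the upper half-plane satisfying F(Az) = A·F(z) for all z ∈ ℍ. Then there exists μ > 0 such that F(w) = μw for all w ∈ ℍ. -/

import Mathlib

/-!
Conjugating by Cayley transforms, `w ↦ halfPlaneToDisc (F I) (F (discToHalfPlane w))` is a
holomorphic self-map of the unit disc fixing `0`, so by the Schwarz lemma `F` does not increase the
pseudo-hyperbolic distance `‖halfPlaneToDisc a z‖` to `I`. As `F (A * I) = A * F I`, the
displacement of `F I` under `z ↦ A * z` is then at most that of `I`; but this displacement is
smallest exactly on the imaginary axis, so `F I = μ * I`. Hence the disc model of `F` fixes the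
nonzero point corresponding to `A * I`, and by the equality case of the Schwarz lemma it is the
identity, i.e. `F` agrees with `z ↦ μ * z`.
-/

open Complex Metric Set

open scoped ComplexConjugate

noncomputable def halfPlaneToDisc (a z : ℂ) : ℂ := (z - a) / (z - conj a)

noncomputable def discToHalfPlane (w : ℂ) : ℂ := I * (1 + w) / (1 - w)

lemma norm_sub_lt_norm_sub_conj {a z : ℂ} (ha : 0 < a.im) (hz : 0 < z.im) :
    ‖z - a‖ < ‖z - conj a‖ := by
  rw [Complex.norm_def, Complex.norm_def]
  apply Real.sqrt_lt_sqrt (normSq_nonneg _)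
  simp only [normSq_apply, sub_re, sub_im, conj_re, conj_im]
  nlinarith

lemma sub_conj_ne_zero {a z : ℂ} (ha : 0 < a.im) (hz : 0 < z.im) : z - conj a ≠ 0 := by
  intro h
  have := congrArg im h
  simp only [sub_im, conj_im, zero_im] at this
  linarith

lemma halfPlaneToDisc_mem_ball {a z : ℂ} (ha : 0 < a.im) (hz : 0 < z.im) :
    halfPlaneToDisc a z ∈ ball (0 : ℂ) 1 := by
  rw [mem_ball_zero_iff, halfPlaneToDisc, norm_div,
    div_lt_one (norm_pos_iff.2 (sub_conj_ne_zero ha hz))]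
  exact norm_sub_lt_norm_sub_conj ha hz

lemma differentiableOn_halfPlaneToDisc {a : ℂ} (ha : 0 < a.im) :
    DifferentiableOn ℂ (halfPlaneToDisc a) {z | 0 < z.im} :=
  DifferentiableOn.div (by fun_prop) (by fun_prop) fun _ hz ↦ sub_conj_ne_zero ha hz

@[simp]
lemma halfPlaneToDisc_self (a : ℂ) : halfPlaneToDisc a a = 0 := by
  simp [halfPlaneToDisc]

lemma halfPlaneToDisc_ofReal_mul {c : ℝ} (hc : c ≠ 0) (a z : ℂ) :
    halfPlaneToDisc (c * a) (c * z) = halfPlaneToDisc a z := by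
  rw [halfPlaneToDisc, halfPlaneToDisc, map_mul, conj_ofReal, ← mul_sub, ← mul_sub,
    mul_div_mul_left _ _ (ofReal_ne_zero.2 hc)]

lemma halfPlaneToDisc_ne_zero {a z : ℂ} (ha : 0 < a.im) (hz : 0 < z.im) (hne : z ≠ a) :
    halfPlaneToDisc a z ≠ 0 :=
  div_ne_zero (sub_ne_zero.2 hne) (sub_conj_ne_zero ha hz)

lemma injOn_halfPlaneToDisc {a : ℂ} (ha : 0 < a.im) :
    InjOn (halfPlaneToDisc a) {z | 0 < z.im} := by
  intro u hu v hv huv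
  have hconj : a - conj a ≠ 0 := sub_conj_ne_zero ha ha
  rw [halfPlaneToDisc, halfPlaneToDisc,
    div_eq_div_iff (sub_conj_ne_zero ha hu) (sub_conj_ne_zero ha hv)] at huv
  have : (u - v) * (a - conj a) = 0 := by linear_combination huv
  exact sub_eq_zero.1 ((mul_eq_zero.1 this).resolve_right hconj)

lemma one_sub_ne_zero_of_mem_ball {w : ℂ} (hw : w ∈ ball (0 : ℂ) 1) : 1 - w ≠ 0 := by
  rintro h
  rw [← sub_eq_zero.1 h] at hw
  simp at hw

lemma im_discToHalfPlane_pos {w : ℂ} (hw : w ∈ ball (0 : ℂ) 1) :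
    0 < (discToHalfPlane w).im := by
  have hnormSq : normSq w < 1 := by
    rw [mem_ball_zero_iff] at hw
    rw [← Complex.sq_norm]
    nlinarith [norm_nonneg w]
  have hden : 0 < normSq (1 - w) := normSq_pos.2 (one_sub_ne_zero_of_mem_ball hw)
  rw [discToHalfPlane, div_im]
  simp only [mul_re, mul_im, I_re, I_im, add_re, add_im, sub_re, sub_im, one_re, one_im]
  rw [normSq_apply] at hnormSq
  rw [div_sub_div_same]
  apply div_pos _ hden
  nlinarith

lemma differentiableOn_discToHalfPlane : DifferentiableOn ℂ discToHalfPlane (ball 0 1) :=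
  DifferentiableOn.div (by fun_prop) (by fun_prop) fun _ hw ↦ one_sub_ne_zero_of_mem_ball hw

@[simp]
lemma discToHalfPlane_zero : discToHalfPlane 0 = I := by
  simp [discToHalfPlane]

lemma discToHalfPlane_halfPlaneToDisc_I {z : ℂ} (hz : 0 < z.im) :
    discToHalfPlane (halfPlaneToDisc I z) = z := by
  have hzI : z + I ≠ 0 := by simpa [conj_I] using sub_conj_ne_zero (a := I) (by simp) hz
  rw [discToHalfPlane, halfPlaneToDisc, conj_I, sub_neg_eq_add]
  have : 2 * I ≠ 0 := by simp
  field_simp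
  ring

lemma normSq_mul_sub_conj (A : ℝ) (w : ℂ) :
    normSq (A * w - conj w) = (A + 1) ^ 2 * normSq w - 4 * A * w.re ^ 2 := by
  simp only [normSq_apply, sub_re, sub_im, mul_re, mul_im, ofReal_re, ofReal_im, conj_re,
    conj_im]
  ring

lemma halfPlaneToDisc_I_ofReal_mul_I (A : ℝ) :
    halfPlaneToDisc I (A * I) = ((A - 1) / (A + 1) : ℝ) := by
  rw [halfPlaneToDisc, conj_I, sub_neg_eq_add, ← sub_one_mul, ← add_one_mul,
    mul_div_mul_right _ _ I_ne_zero]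
  norm_cast

lemma re_eq_zero_of_norm_halfPlaneToDisc_mul_le {A : ℝ} (hA : 0 < A) (hA1 : A ≠ 1) {w : ℂ}
    (hw : 0 < w.im) (h : ‖halfPlaneToDisc w (A * w)‖ ≤ ‖halfPlaneToDisc I (A * I)‖) :
    w.re = 0 := by
  have hD : 0 < ‖A * w - conj w‖ := by
    refine norm_pos_iff.2 fun h0 ↦ ?_
    have := congrArg im h0
    simp only [sub_im, mul_im, ofReal_re, ofReal_im, conj_im, zero_im] at this
    nlinarith
  have hA1' : 0 < |A - 1| := abs_pos.2 (sub_ne_zero.2 hA1)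
  have hnum : A * w - w = ((A - 1 : ℝ) : ℂ) * w := by push_cast; ring
  rw [halfPlaneToDisc, halfPlaneToDisc_I_ofReal_mul_I, hnum, norm_div, norm_mul, norm_real,
    norm_real, Real.norm_eq_abs, Real.norm_eq_abs, abs_div, abs_of_pos (by linarith : 0 < A + 1),
    div_le_div_iff₀ hD (by linarith), mul_assoc, mul_le_mul_iff_right₀ hA1'] at h
  have hsq : (A + 1) ^ 2 * normSq w ≤ normSq (A * w - conj w) := by
    rw [← Complex.sq_norm, ← Complex.sq_norm]
    calc (A + 1) ^ 2 * ‖w‖ ^ 2 = (‖w‖ * (A + 1)) ^ 2 := by ring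
      _ ≤ ‖A * w - conj w‖ ^ 2 := pow_le_pow_left₀ (by positivity) h 2
  rw [normSq_mul_sub_conj] at hsq
  have hre : w.re ^ 2 = 0 := le_antisymm (by nlinarith) (sq_nonneg _)
  exact pow_eq_zero_iff two_ne_zero |>.1 hre

lemma eqOn_id_of_mapsTo_ball_of_apply_eq_self {f : ℂ → ℂ} {R : ℝ}
    (hd : DifferentiableOn ℂ f (ball 0 R)) (h_maps : MapsTo f (ball 0 R) (closedBall 0 R))
    (h₀ : f 0 = 0) {z₀ : ℂ} (hz₀ : z₀ ∈ ball 0 R) (hne : z₀ ≠ 0) (hfix : f z₀ = z₀) :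
    EqOn f id (ball 0 R) := by
  have hR : R ≠ 0 := (nonempty_ball.1 ⟨z₀, hz₀⟩).ne'
  have hslope : dslope f 0 z₀ = 1 := by
    rw [dslope_of_ne _ hne, slope_def_field, hfix, h₀, sub_zero, div_self hne]
  intro z hz
  simpa [h₀, hslope] using Complex.affine_of_mapsTo_ball_of_norm_dslope_eq_div hd
    (by rwa [h₀]) hz₀ (by rw [hslope, norm_one, div_self hR]) hz

section DiscModel

variable {F : ℂ → ℂ}

noncomputable def discModel (F : ℂ → ℂ) (w : ℂ) : ℂ :=
  halfPlaneToDisc (F I) (F (discToHalfPlane w))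

lemma differentiableOn_discModel (hd : DifferentiableOn ℂ F {z | 0 < z.im})
    (hm : MapsTo F {z | 0 < z.im} {z | 0 < z.im}) : DifferentiableOn ℂ (discModel F) (ball 0 1) :=
  (differentiableOn_halfPlaneToDisc (hm (by simp))).comp
    (hd.comp differentiableOn_discToHalfPlane fun _ ↦ im_discToHalfPlane_pos)
    fun _ hw ↦ hm (im_discToHalfPlane_pos hw)

lemma mapsTo_discModel (hm : MapsTo F {z | 0 < z.im} {z | 0 < z.im}) :
    MapsTo (discModel F) (ball 0 1) (closedBall 0 1) := fun _ hw ↦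
  ball_subset_closedBall <|
    halfPlaneToDisc_mem_ball (hm (by simp)) (hm (im_discToHalfPlane_pos hw))

@[simp]
lemma discModel_zero : discModel F 0 = 0 := by
  simp [discModel]

lemma discModel_halfPlaneToDisc_I {z : ℂ} (hz : 0 < z.im) :
    discModel F (halfPlaneToDisc I z) = halfPlaneToDisc (F I) (F z) := by
  rw [discModel, discToHalfPlane_halfPlaneToDisc_I hz]

lemma norm_halfPlaneToDisc_apply_le (hd : DifferentiableOn ℂ F {z | 0 < z.im})
    (hm : MapsTo F {z | 0 < z.im} {z | 0 < z.im}) {z : ℂ} (hz : 0 < z.im) :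
    ‖halfPlaneToDisc (F I) (F z)‖ ≤ ‖halfPlaneToDisc I z‖ := by
  rw [← discModel_halfPlaneToDisc_I hz]
  exact Complex.norm_le_norm_of_mapsTo_ball (differentiableOn_discModel hd hm)
    (mapsTo_discModel hm) discModel_zero
    (mem_ball_zero_iff.1 (halfPlaneToDisc_mem_ball (by simp) hz))

lemma halfPlaneToDisc_apply_eq_of_eq (hd : DifferentiableOn ℂ F {z | 0 < z.im})
    (hm : MapsTo F {z | 0 < z.im} {z | 0 < z.im}) {z : ℂ} (hz : 0 < z.im) (hne : z ≠ I)
    (heq : halfPlaneToDisc (F I) (F z) = halfPlaneToDisc I z) {u : ℂ} (hu : 0 < u.im) :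
    halfPlaneToDisc (F I) (F u) = halfPlaneToDisc I u := by
  rw [← discModel_halfPlaneToDisc_I hu]
  refine eqOn_id_of_mapsTo_ball_of_apply_eq_self (differentiableOn_discModel hd hm)
    (mapsTo_discModel hm) discModel_zero (halfPlaneToDisc_mem_ball (by simp) hz)
    (halfPlaneToDisc_ne_zero (by simp) hz hne) ?_ (halfPlaneToDisc_mem_ball (by simp) hu)
  rwa [discModel_halfPlaneToDisc_I hz]

end DiscModel

/-- Heins' theorem on maps commuting with a hyperbolic automorphism. -/
theorem heins (A : ℝ) (hA : 1 < A) (F : ℂ → ℂ)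
    (hd : DifferentiableOn ℂ F {z : ℂ | 0 < z.im})
    (hm : Set.MapsTo F {z : ℂ | 0 < z.im} {z : ℂ | 0 < z.im})
    (hcomm : ∀ z : ℂ, 0 < z.im → F (A * z) = A * F z) :
    ∃ μ : ℝ, 0 < μ ∧ ∀ z : ℂ, 0 < z.im → F z = μ * z := by
  have hFI_im : 0 < (F I).im := hm (by simp)
  have hAI : 0 < ((A : ℂ) * I).im := by simpa using zero_lt_one.trans hA
  have hFAI : F (A * I) = A * F I := hcomm I (by simp)
  have hre : (F I).re = 0 := by
    refine re_eq_zero_of_norm_halfPlaneToDisc_mul_le (by linarith) hA.ne' hFI_im ?_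
    simpa [hFAI] using norm_halfPlaneToDisc_apply_le hd hm hAI
  obtain ⟨μ, hμ, hFI⟩ : ∃ μ : ℝ, 0 < μ ∧ F I = μ * I :=
    ⟨(F I).im, hFI_im, Complex.ext (by simp [hre]) (by simp)⟩
  have hfix : halfPlaneToDisc (F I) (F (A * I)) = halfPlaneToDisc I (A * I) := by
    rw [hFAI, hFI, mul_left_comm, halfPlaneToDisc_ofReal_mul hμ.ne']
  have hAI_ne : (A : ℂ) * I ≠ I := fun h ↦ by simpa [hA.ne'] using congrArg im h
  refine ⟨μ, hμ, fun z hz ↦ injOn_halfPlaneToDisc (a := μ * I) (by simpa using hμ) (hm hz)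
    (by simpa using mul_pos hμ hz) ?_⟩
  rw [← hFI, halfPlaneToDisc_apply_eq_of_eq hd hm hAI hAI_ne hfix hz, hFI,
    halfPlaneToDisc_ofReal_mul hμ.ne']
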